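/- Let V be a finite set of n nodes and σ : Finset V → ℝ a monotone and submodular set function such that for every ranking r the values M_r(v) are pairwise distinct, and let F be the IMRank step (sorting V in decreasing order of M_r). If a ranking r is not self-consistent, then F(r) ≠ r and there exists k with 1 ≤ k ≤ n such that I_r(k) < I_{F(r)}(k), while I_r(k) ≤ I_{F(r)}(k) for all k. -/
import Mathlib


open Finset

variable {V : Type*} [Fintype V] [DecidableEq V]

/-- The set of top-`k` nodes of ranking `r` (positions `1,…,k`, i.e. indices `< k`). -/
def topk {n : ℕ} (r : Fin n ≃ V) (k : ℕ) : Finset V :=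
  (Finset.univ.filter fun i : Fin n => (i : ℕ) < k).image r

/-- Ranking-based marginal influence spread `M_r(v) = σ(T_r(i)) − σ(T_r(i−1))`
where `i` is the (1-based) position of `v` in `r`. -/
noncomputable def margM {n : ℕ} (σ : Finset V → ℝ) (r : Fin n ≃ V) (v : V) : ℝ :=
  σ (topk r ((r.symm v : ℕ) + 1)) - σ (topk r (r.symm v))

/-- Influence spread of the top-`k` nodes: `I_r(k) = Σ_{i=1}^k M_r(v_{r_i})`. -/
noncomputable def inflI {n : ℕ} (σ : Finset V → ℝ) (r : Fin n ≃ V) (k : ℕ) : ℝ :=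
  ∑ i ∈ Finset.univ.filter (fun i : Fin n => (i : ℕ) < k), margM σ r (r i)

lemma mem_topk {n : ℕ} (r : Fin n ≃ V) (k : ℕ) (v : V) :
    v ∈ topk r k ↔ ((r.symm v : ℕ) < k) := by
  constructor
  · rintro h
    rw [topk, Finset.mem_image] at h
    obtain ⟨i, hi, rfl⟩ := h
    simpa using (Finset.mem_filter.1 hi).2
  · intro h
    rw [topk, Finset.mem_image]
    exact ⟨r.symm v, Finset.mem_filter.2 ⟨Finset.mem_univ _, h⟩, r.apply_symm_apply v⟩

lemma topk_zero {n : ℕ} (r : Fin n ≃ V) : topk r 0 = ∅ := by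
  ext v; simp [mem_topk]

lemma topk_succ {n : ℕ} (r : Fin n ≃ V) (m : Fin n) :
    topk r ((m : ℕ) + 1) = insert (r m) (topk r m) := by
  ext v
  simp only [mem_topk, Finset.mem_insert, Nat.lt_succ_iff_lt_or_eq]
  constructor
  · rintro (h | h)
    · exact Or.inr h
    · left
      have : r.symm v = m := Fin.ext h
      rw [← this, r.apply_symm_apply]
  · rintro (rfl | h)
    · right; simp
    · exact Or.inl h

lemma card_topk {n : ℕ} (r : Fin n ≃ V) {k : ℕ} (hk : k ≤ n) :
    (topk r k).card = k := by
  rw [topk, Finset.card_image_of_injective _ r.injective]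
  have : (Finset.univ.filter fun i : Fin n => (i : ℕ) < k)
      = Finset.univ.map (Fin.castLEEmb hk) := by
    ext i
    simp only [Finset.mem_filter, Finset.mem_univ, true_and, Finset.mem_map,
      Fin.coe_castLEEmb]
    constructor
    · intro h; exact ⟨⟨(i : ℕ), h⟩, rfl⟩
    · rintro ⟨j, -, rfl⟩; exact j.isLt
  rw [this, Finset.card_map, Finset.card_univ, Fintype.card_fin]

lemma sum_marg_le {n : ℕ} (σ : Finset V → ℝ)
    (hsub : ∀ S T : Finset V, S ⊆ T → ∀ v ∉ T,
      σ (insert v T) - σ T ≤ σ (insert v S) - σ S)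
    (r : Fin n ≃ V) (B : Finset V) :
    σ ∅ + ∑ v ∈ B, margM σ r v ≤ σ B := by
  induction B using Finset.strongInduction with
  | _ B ih =>
    rcases B.eq_empty_or_nonempty with rfl | hB
    · simp
    · obtain ⟨v, hvB, hmax⟩ := B.exists_max_image (fun a => ((r.symm a : ℕ))) hB
      set B' := B.erase v with hB'
      have hss : B' ⊂ B := Finset.erase_ssubset hvB
      have hIH := ih B' hss
      have hsum : ∑ w ∈ B, margM σ r w = margM σ r v + ∑ w ∈ B', margM σ r w :=
        (Finset.add_sum_erase B _ hvB).symm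
      set T := topk r ((r.symm v : ℕ)) with hT
      have hvT : v ∉ T := by simp [hT, mem_topk]
      have hBT : B' ⊆ T := by
        intro w hw
        have hwB : w ∈ B := Finset.mem_of_mem_erase hw
        have hne : w ≠ v := Finset.ne_of_mem_erase hw
        have hle := hmax w hwB
        have hlt : ((r.symm w : ℕ)) < ((r.symm v : ℕ)) := by
          rcases lt_or_eq_of_le hle with h | h
          · exact h
          · exact absurd (r.symm.injective (Fin.ext h)) hne
        exact (mem_topk r _ w).2 hlt
      have hMv : margM σ r v = σ (insert v T) - σ T := by
        rw [margM, hT]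
        congr 1
        have := topk_succ r (r.symm v)
        rw [this, r.apply_symm_apply]
      have hsubm := hsub B' T hBT v hvT
      have hins : insert v B' = B := Finset.insert_erase hvB
      have : σ (insert v B') - σ B' ≥ margM σ r v := by rw [hMv]; exact hsubm
      rw [hins] at this
      rw [hsum]
      linarith

lemma inflI_telescope {n : ℕ} (σ : Finset V → ℝ) (r : Fin n ≃ V) :
    ∀ k : ℕ, k ≤ n → inflI σ r k = σ (topk r k) - σ ∅ := by
  intro k
  induction k with
  | zero => intro _; simp [inflI, topk_zero]
  | succ m ihm =>
    intro hk
    have hm : m < n := hk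
    have hfil : (Finset.univ.filter fun i : Fin n => (i : ℕ) < m + 1)
        = insert ⟨m, hm⟩ (Finset.univ.filter fun i : Fin n => (i : ℕ) < m) := by
      ext i
      simp only [Finset.mem_filter, Finset.mem_univ, true_and, Finset.mem_insert,
        Nat.lt_succ_iff_lt_or_eq, Fin.ext_iff]
      tauto
    have hnm : (⟨m, hm⟩ : Fin n) ∉ Finset.univ.filter fun i : Fin n => (i : ℕ) < m := by
      simp
    rw [inflI, hfil, Finset.sum_insert hnm]
    have hM : margM σ r (r ⟨m, hm⟩) = σ (topk r (m + 1)) - σ (topk r m) := by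
      rw [margM, r.symm_apply_apply]
    have : ∑ i ∈ Finset.univ.filter (fun i : Fin n => (i : ℕ) < m), margM σ r (r i)
        = inflI σ r m := rfl
    rw [hM, this, ihm (le_of_lt hm)]
    ring

lemma inflI_eq_sum_topk {n : ℕ} (σ : Finset V → ℝ) (r : Fin n ≃ V) (k : ℕ) :
    inflI σ r k = ∑ v ∈ topk r k, margM σ r v := by
  rw [inflI, topk, Finset.sum_image]
  intro x _ y _ h
  exact r.injective h

lemma topk_lt {n : ℕ} (σ : Finset V → ℝ) (r s : Fin n ≃ V)
    (hdec : ∀ i j : Fin n, i ≤ j → margM σ r (s j) ≤ margM σ r (s i))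
    (hinj : Function.Injective (margM σ r))
    {k : ℕ} {v w : V} (hv : v ∈ topk s k) (hw : w ∉ topk s k) :
    margM σ r w < margM σ r v := by
  rw [mem_topk] at hv hw
  push_neg at hw
  have hij : (s.symm v) ≤ (s.symm w) := by
    have : ((s.symm v : ℕ)) < ((s.symm w : ℕ)) := lt_of_lt_of_le hv hw
    exact le_of_lt this
  have hle := hdec (s.symm v) (s.symm w) hij
  rw [s.apply_symm_apply, s.apply_symm_apply] at hle
  rcases lt_or_eq_of_le hle with h | h
  · exact h
  · exfalso
    have : w = v := hinj h
    subst this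
    exact absurd rfl (Nat.ne_of_lt (lt_of_lt_of_le hv hw))

lemma sum_topk_lt {n : ℕ} (σ : Finset V → ℝ) (r s : Fin n ≃ V)
    (hdec : ∀ i j : Fin n, i ≤ j → margM σ r (s j) ≤ margM σ r (s i))
    (hinj : Function.Injective (margM σ r))
    {k : ℕ} (hk : k ≤ n) (hne : topk r k ≠ topk s k) :
    ∑ v ∈ topk r k, margM σ r v < ∑ v ∈ topk s k, margM σ r v := by
  set A := topk r k with hA
  set B := topk s k with hB
  set M := margM σ r with hM
  have hcardA : A.card = k := card_topk r hk
  have hcardB : B.card = k := card_topk s hk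
  have hBA : (B \ A).Nonempty := by
    rw [Finset.sdiff_nonempty]
    intro hsub
    exact hne (Finset.eq_of_subset_of_card_le hsub (by omega)).symm
  have hAB : (A \ B).Nonempty := by
    rw [Finset.sdiff_nonempty]
    intro hsub
    exact hne (Finset.eq_of_subset_of_card_le hsub (by omega))
  have hcc : (A \ B).card = (B \ A).card := by
    have h1 := Finset.card_sdiff_add_card_inter A B
    have h2 := Finset.card_sdiff_add_card_inter B A
    rw [Finset.inter_comm] at h2
    omega
  have hlt : ∀ a ∈ A \ B, ∀ b ∈ B \ A, M a < M b := by
    intro a ha b hb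
    exact topk_lt σ r s hdec hinj (Finset.mem_sdiff.1 hb).1 (Finset.mem_sdiff.1 ha).2
  obtain ⟨b₀, hb₀, hinf⟩ := Finset.exists_mem_eq_inf' hBA M
  have h1 : ∑ a ∈ A \ B, M a < (A \ B).card • ((B \ A).inf' hBA M) := by
    have := Finset.sum_lt_sum_of_nonempty hAB
      (f := M) (g := fun _ => (B \ A).inf' hBA M)
      (fun a ha => by rw [hinf]; exact hlt a ha b₀ hb₀)
    simpa using this
  have h2 : (B \ A).card • ((B \ A).inf' hBA M) ≤ ∑ b ∈ B \ A, M b :=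
    Finset.card_nsmul_le_sum _ _ _ (fun b hb => Finset.inf'_le M hb)
  have hsplitA : ∑ a ∈ A \ B, M a + ∑ a ∈ A ∩ B, M a = ∑ a ∈ A, M a := by
    have := Finset.sum_sdiff (f := M) (Finset.inter_subset_left (s₁ := A) (s₂ := B))
    rwa [Finset.sdiff_inter_self_left] at this
  have hsplitB : ∑ b ∈ B \ A, M b + ∑ b ∈ A ∩ B, M b = ∑ b ∈ B, M b := by
    have := Finset.sum_sdiff (f := M) (Finset.inter_subset_right (s₁ := A) (s₂ := B))
    rwa [Finset.sdiff_inter_self_right] at this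
  rw [hcc] at h1
  linarith

/-- with `σ` monotone and submodular and `M_r` pairwise distinct for every
ranking, if `r` is not self-consistent then the IMRank step `F` satisfies `F r ≠ r`,
`I_r(k) ≤ I_{F r}(k)` for all `1 ≤ k ≤ n`, and `I_r(k) < I_{F r}(k)` for some such `k`. -/
theorem imrank_step_improves {n : ℕ} (σ : Finset V → ℝ)
    (hmono : ∀ S T : Finset V, S ⊆ T → σ S ≤ σ T)
    (hsub : ∀ S T : Finset V, S ⊆ T → ∀ v ∉ T,
      σ (insert v T) - σ T ≤ σ (insert v S) - σ S)
    (hdist : ∀ r : Fin n ≃ V, Function.Injective (margM σ r))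
    (F : (Fin n ≃ V) → (Fin n ≃ V))
    (hF : ∀ (r : Fin n ≃ V) (i j : Fin n), i ≤ j → margM σ r (F r j) ≤ margM σ r (F r i))
    (r : Fin n ≃ V)
    (hnsc : ¬ (∀ i j : Fin n, i ≤ j → margM σ r (r j) ≤ margM σ r (r i))) :
    F r ≠ r ∧
    (∀ k : ℕ, 1 ≤ k → k ≤ n → inflI σ r k ≤ inflI σ (F r) k) ∧
    (∃ k : ℕ, 1 ≤ k ∧ k ≤ n ∧ inflI σ r k < inflI σ (F r) k) := by
  set s := F r with hs
  have hdec : ∀ i j : Fin n, i ≤ j → margM σ r (s j) ≤ margM σ r (s i) := hF r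
  have hinj := hdist r
  -- F r ≠ r
  have hFne : F r ≠ r := by
    intro h
    apply hnsc
    intro i j hij
    have := hF r i j hij
    rwa [h] at this
  -- key chain: for k ≤ n, inflI σ r k = ∑_{topk r k} M and
  -- ∑_{topk s k} M ≤ σ (topk s k) - σ ∅ = inflI σ s k
  have hchain : ∀ k : ℕ, k ≤ n → ∑ v ∈ topk s k, margM σ r v ≤ inflI σ s k := by
    intro k hk
    have h1 := sum_marg_le σ hsub r (topk s k)
    rw [inflI_telescope σ s k hk]
    linarith
  refine ⟨hFne, ?_, ?_⟩
  · -- ≤ for all k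
    intro k h1k hkn
    rw [inflI_eq_sum_topk σ r k]
    refine le_trans ?_ (hchain k hkn)
    by_cases hAB : topk r k = topk s k
    · rw [hAB]
    · exact le_of_lt (sum_topk_lt σ r s hdec hinj hkn hAB)
  · -- strict for some k
    push_neg at hnsc
    obtain ⟨i, j, hij, hlt⟩ := hnsc
    have hijne : i ≠ j := by
      intro h; subst h; exact lt_irrefl _ hlt
    have hijlt : (i : ℕ) < (j : ℕ) := lt_of_le_of_ne hij (fun h => hijne (Fin.ext h))
    refine ⟨(i : ℕ) + 1, le_add_self, i.isLt, ?_⟩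
    have hk : (i : ℕ) + 1 ≤ n := i.isLt
    have hAB : topk r ((i : ℕ) + 1) ≠ topk s ((i : ℕ) + 1) := by
      intro h
      have hiA : r i ∈ topk r ((i : ℕ) + 1) := by
        rw [mem_topk, r.symm_apply_apply]; omega
      have hjA : r j ∉ topk r ((i : ℕ) + 1) := by
        rw [mem_topk, r.symm_apply_apply]; omega
      rw [h] at hiA hjA
      exact absurd (topk_lt σ r s hdec hinj hiA hjA) (not_lt.2 (le_of_lt hlt))
    rw [inflI_eq_sum_topk σ r]
    exact lt_of_lt_of_le (sum_topk_lt σ r s hdec hinj hk hAB) (hchain _ hk)
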